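/- For every q ∈ [0,1], every N ≥ 2 and every word (i_1, …, i_n) with entries in {1, …, N−1}, there exist finitely many reduced words w^{(1)}, …, w^{(m)} (words (j_1, …, j_ℓ) such that the permutation s_{j_1} ∘ ⋯ ∘ s_{j_ℓ} has Coxeter length ℓ) and weights λ_1, …, λ_m ≥ 0 with λ_1 + ⋯ + λ_m = 1, such that, as maps on probability measures on S_N, π_{i_n} ∘ ⋯ ∘ π_{i_1} = Σ_{j=1}^m λ_j · (π_{j_{ℓ_j}} ∘ ⋯ ∘ π_{j_1}), where (j_1, …, j_{ℓ_j}) denotes the word w^{(j)}. -/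

import Mathlib

open MeasureTheory
open scoped NNReal

/-- Equip the finite symmetric group `S_N` with the discrete (full) σ-algebra. -/
instance (N : ℕ) : MeasurableSpace (Equiv.Perm (Fin N)) := ⊤

/-- The adjacent transposition `s_i` of `{1, …, N}` exchanging `i` and `i+1`
(for `1 ≤ i ≤ N−1`; positions in `Fin N` are 0-indexed, so `s_i` swaps the
0-indexed positions `i−1` and `i`). -/
def adjT (N : ℕ) (i : {i : ℕ // 1 ≤ i ∧ i < N}) : Equiv.Perm (Fin N) :=
  Equiv.swap ⟨i.1 - 1, by omega⟩ ⟨i.1, i.2.2⟩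

/-- The operator `τ_i : η ↦ η ∘ s_i`, exchanging the entries in positions
`i` and `i+1`. -/
def tauP (N : ℕ) (i : {i : ℕ // 1 ≤ i ∧ i < N}) (η : Equiv.Perm (Fin N)) :
    Equiv.Perm (Fin N) :=
  η * adjT N i

/-- The operator `σ_i : η ↦ η ∘ s_i` if `η(i) < η(i+1)` and `η ↦ η` otherwise,
sorting positions `i`, `i+1` into decreasing order. -/
def sigmaP (N : ℕ) (i : {i : ℕ // 1 ≤ i ∧ i < N}) (η : Equiv.Perm (Fin N)) :
    Equiv.Perm (Fin N) :=
  if η ⟨i.1 - 1, by omega⟩ < η ⟨i.1, i.2.2⟩ then η * adjT N i else η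

/-- The Markov operator `π_i ν = q·(τ_i)_*ν + (1−q)·(σ_i)_*ν` on measures
on `S_N`. -/
noncomputable def piP (N : ℕ) (q : ℝ≥0) (i : {i : ℕ // 1 ≤ i ∧ i < N})
    (ν : Measure (Equiv.Perm (Fin N))) : Measure (Equiv.Perm (Fin N)) :=
  q • ν.map (tauP N i) + (1 - q) • ν.map (sigmaP N i)

/-!
The operators `π_i` satisfy Hecke-type relations: `π_i π_i = q + (1 - q) π_i`,
`π_i π_k = π_k π_i` for `|i - k| ≥ 2` and `π_i π_k π_i = π_k π_i π_k` for `|i - k| = 1`.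
Everything is linear, so these are checked on Dirac masses, where `π_i δ_η = δ_{η s_i}` if
`η(i) < η(i+1)` and `π_i δ_η = q δ_{η s_i} + (1 - q) δ_η` otherwise. Hence the operator of a
word depends only on its class modulo commutation and braid moves. Induct on the word: if `u` is
reduced and `u i` is not, then the permutation of `u` has a descent at `i`, and the exchange
property (proved with inversion counts) makes `u` braid equivalent to some `v i`; then
`π_{u i} = π_{v i i} = q π_v + (1 - q) π_{v i}` with `v` and `v i` reduced.
-/

open scoped ENNReal
open Equiv

theorem Equiv.Perm.eq_one_of_strictMono {α : Type*} [LinearOrder α] [WellFoundedLT α]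
    {x : Perm α} (hx : StrictMono x) : x = 1 := by
  have : hx.orderIsoOfSurjective x x.surjective = OrderIso.refl α := Subsingleton.elim _ _
  ext1 a
  exact DFunLike.congr_fun this a

theorem MeasureTheory.Measure.linearMap_ext_dirac {α β : Type*} [MeasurableSpace α]
    [MeasurableSpace β] [Fintype α] [MeasurableSingletonClass α]
    {F G : Measure α →ₗ[ℝ≥0∞] Measure β} (h : ∀ a, F (dirac a) = G (dirac a)) :
    F = G := by
  ext1 μ
  rw [← μ.sum_smul_dirac, Measure.sum_fintype]
  simp only [_root_.map_sum, LinearMap.map_smul, h]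

namespace AdjacentSorting

abbrev Letter (N : ℕ) := {i : ℕ // 1 ≤ i ∧ i < N}

variable {N : ℕ}

namespace Letter

def lo (i : Letter N) : Fin N := ⟨i.1 - 1, by omega⟩

def hi (i : Letter N) : Fin N := ⟨i.1, i.2.2⟩

/-- Letters whose transpositions have disjoint supports. -/
def Far (i k : Letter N) : Prop := i.1 + 2 ≤ k.1 ∨ k.1 + 2 ≤ i.1

lemma Far.symm {i k : Letter N} (h : Far i k) : Far k i := Or.symm h

lemma lo_lt_hi (i : Letter N) : i.lo < i.hi := by
  rw [Fin.lt_def]; simp only [lo, hi]; omega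

lemma hi_val (i : Letter N) : i.hi.val = i.lo.val + 1 := by
  simp only [lo, hi]; have := i.2.1; omega

lemma lo_ne_hi (i : Letter N) : i.lo ≠ i.hi := (lo_lt_hi i).ne

lemma lo_eq_hi_of_succ {i k : Letter N} (hk : k.1 = i.1 + 1) : k.lo = i.hi := by
  ext; simp only [lo, hi]; omega

end Letter

open Letter

lemma adjT_eq_swap (i : Letter N) : adjT N i = swap i.lo i.hi := rfl

lemma adjT_mul_self (i : Letter N) : adjT N i * adjT N i = 1 := swap_mul_self _ _

lemma mul_adjT_mul_adjT (x : Perm (Fin N)) (i : Letter N) : x * adjT N i * adjT N i = x := by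
  rw [mul_assoc, adjT_mul_self, mul_one]

lemma adjT_apply_adjT (i : Letter N) (u : Fin N) : adjT N i (adjT N i u) = u :=
  swap_apply_self _ _ _

lemma adjT_apply_lo (i : Letter N) : adjT N i i.lo = i.hi := swap_apply_left _ _

lemma adjT_apply_hi (i : Letter N) : adjT N i i.hi = i.lo := swap_apply_right _ _

section Far

variable {i k : Letter N} (h : Far i k)
include h

lemma Letter.Far.adjT_apply_lo : adjT N k i.lo = i.lo := by
  have := k.2.1
  unfold Far at h
  exact swap_apply_of_ne_of_ne (Fin.ne_of_val_ne (by simp only [lo]; omega))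
    (Fin.ne_of_val_ne (by simp only [lo]; omega))

lemma Letter.Far.adjT_apply_hi : adjT N k i.hi = i.hi := by
  have := i.2.1
  unfold Far at h
  exact swap_apply_of_ne_of_ne (Fin.ne_of_val_ne (by simp only [hi]; omega))
    (Fin.ne_of_val_ne (by simp only [hi]; omega))

lemma Letter.Far.adjT_commute : adjT N i * adjT N k = adjT N k * adjT N i := by
  rw [adjT_eq_swap i, mul_swap_eq_swap_mul, h.adjT_apply_lo, h.adjT_apply_hi]

end Far

section Succ

variable {i k : Letter N} (hk : k.1 = i.1 + 1)
include hk

lemma lo_ne_hi_succ : i.lo ≠ k.hi := by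
  have := i.2.1
  simp only [ne_eq, Fin.ext_iff, lo, hi]; omega

lemma hi_ne_hi_succ : i.hi ≠ k.hi := by
  simp only [ne_eq, Fin.ext_iff, hi]; omega

lemma adjT_succ_apply_lo : adjT N k i.lo = i.lo := by
  rw [adjT_eq_swap, lo_eq_hi_of_succ hk]
  exact swap_apply_of_ne_of_ne (lo_ne_hi i) (lo_ne_hi_succ hk)

lemma adjT_succ_apply_hi : adjT N k i.hi = k.hi := by
  rw [← lo_eq_hi_of_succ hk, adjT_apply_lo]

lemma adjT_succ_apply_hi_succ : adjT N k k.hi = i.hi := by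
  rw [adjT_apply_hi, lo_eq_hi_of_succ hk]

lemma adjT_apply_hi_succ : adjT N i k.hi = k.hi :=
  swap_apply_of_ne_of_ne (lo_ne_hi_succ hk).symm (hi_ne_hi_succ hk).symm

lemma adjT_braid : adjT N i * adjT N k * adjT N i = adjT N k * adjT N i * adjT N k := by
  have hAC := lo_ne_hi_succ hk
  have hBC := hi_ne_hi_succ hk
  rw [adjT_eq_swap i, adjT_eq_swap k, lo_eq_hi_of_succ hk, mul_swap_eq_swap_mul,
    Perm.mul_apply, Perm.mul_apply, swap_apply_of_ne_of_ne (lo_ne_hi i) hAC, swap_apply_left,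
    swap_apply_left, swap_apply_of_ne_of_ne hAC.symm hBC.symm, mul_assoc]

lemma mul_adjT_braid (x : Perm (Fin N)) :
    x * adjT N i * adjT N k * adjT N i = x * adjT N k * adjT N i * adjT N k := by
  simpa only [mul_assoc] using congrArg (x * ·) (adjT_braid hk)

end Succ

def wordProd (w : List (Letter N)) : Perm (Fin N) := (w.map (adjT N)).prod

@[simp] lemma wordProd_nil : wordProd ([] : List (Letter N)) = 1 := rfl

@[simp] lemma wordProd_append (u v : List (Letter N)) :
    wordProd (u ++ v) = wordProd u * wordProd v := by
  simp [wordProd]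

@[simp] lemma wordProd_singleton (i : Letter N) : wordProd [i] = adjT N i := by
  simp [wordProd]

def IsReduced (w : List (Letter N)) : Prop :=
  ∀ v, wordProd v = wordProd w → w.length ≤ v.length

def inversions (x : Perm (Fin N)) : Finset (Fin N × Fin N) :=
  {p | p.1 < p.2 ∧ x p.2 < x p.1}

def inversionCount (x : Perm (Fin N)) : ℕ := (inversions x).card

lemma mem_inversions {x : Perm (Fin N)} {p : Fin N × Fin N} :
    p ∈ inversions x ↔ p.1 < p.2 ∧ x p.2 < x p.1 := by
  simp [inversions]

lemma adjT_lt_adjT_iff (i : Letter N) {u v : Fin N} (h₁ : (u, v) ≠ (i.lo, i.hi))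
    (h₂ : (u, v) ≠ (i.hi, i.lo)) : adjT N i u < adjT N i v ↔ u < v := by
  have := i.hi_val
  simp only [ne_eq, Prod.mk.injEq, adjT_eq_swap, swap_apply_def] at *
  split_ifs <;> simp only [Fin.lt_def, Fin.ext_iff] at * <;> omega

lemma inversions_mul_adjT_erase (x : Perm (Fin N)) (i : Letter N) :
    (inversions (x * adjT N i)).erase (i.lo, i.hi)
      = ((inversions x).erase (i.lo, i.hi)).map (prodCongr (adjT N i) (adjT N i)).toEmbedding := by
  have hs : (adjT N i).symm = adjT N i := symm_swap _ _
  ext ⟨u, v⟩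
  simp only [Finset.mem_erase, Finset.mem_map_equiv, mem_inversions, prodCongr_symm, hs,
    prodCongr_apply, Prod.map, Perm.mul_apply]
  by_cases h₁ : (u, v) = (i.lo, i.hi)
  · simp_all [adjT_apply_lo, adjT_apply_hi, (lo_lt_hi i).not_gt]
  by_cases h₂ : (u, v) = (i.hi, i.lo)
  · simp_all [adjT_apply_lo, adjT_apply_hi, (lo_lt_hi i).not_gt]
  have h₃ : (adjT N i u, adjT N i v) ≠ (i.lo, i.hi) := fun h => h₂ <| by
    rw [Prod.mk.injEq] at h ⊢
    exact ⟨by rw [← adjT_apply_adjT i u, h.1, adjT_apply_lo],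
      by rw [← adjT_apply_adjT i v, h.2, adjT_apply_hi]⟩
  rw [adjT_lt_adjT_iff i h₁ h₂]
  tauto

lemma inversionCount_mul_adjT_of_lt {x : Perm (Fin N)} {i : Letter N} (h : x i.lo < x i.hi) :
    inversionCount (x * adjT N i) = inversionCount x + 1 := by
  have hmem : (i.lo, i.hi) ∈ inversions (x * adjT N i) := by
    rw [mem_inversions]
    simpa [Perm.mul_apply, adjT_apply_lo, adjT_apply_hi] using ⟨i.lo_lt_hi, h⟩
  have hnmem : (i.lo, i.hi) ∉ inversions x := by
    rw [mem_inversions]; exact fun h' => h'.2.not_gt h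
  unfold inversionCount
  rw [← Finset.card_erase_add_one hmem, inversions_mul_adjT_erase, Finset.card_map,
    Finset.erase_eq_of_notMem hnmem]

lemma inversionCount_mul_adjT_of_gt {x : Perm (Fin N)} {i : Letter N} (h : x i.hi < x i.lo) :
    inversionCount x = inversionCount (x * adjT N i) + 1 := by
  have h' : (x * adjT N i) i.lo < (x * adjT N i) i.hi := by
    simpa [Perm.mul_apply, adjT_apply_lo, adjT_apply_hi] using h
  simpa only [mul_adjT_mul_adjT] using inversionCount_mul_adjT_of_lt h'

lemma inversionCount_one : inversionCount (1 : Perm (Fin N)) = 0 := by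
  simp only [inversionCount, Finset.card_eq_zero, Finset.eq_empty_iff_forall_notMem,
    mem_inversions, Perm.coe_one, id_eq]
  exact fun p h => h.1.not_gt h.2

lemma exists_descent {x : Perm (Fin N)} (hx : x ≠ 1) : ∃ i : Letter N, x i.hi < x i.lo := by
  by_contra! h
  apply hx
  cases N with
  | zero => exact Subsingleton.elim _ _
  | succ n =>
    refine Perm.eq_one_of_strictMono (Fin.strictMono_iff_lt_succ.2 fun j => ?_)
    have hj := h ⟨j.1 + 1, by omega, by omega⟩
    have hlo : Letter.lo ⟨j.1 + 1, by omega, by omega⟩ = j.castSucc := by ext; simp [lo]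
    have hhi : Letter.hi ⟨j.1 + 1, by omega, by omega⟩ = j.succ := by ext; simp [hi]
    rw [hlo, hhi] at hj
    exact hj.lt_of_ne (x.injective.ne Fin.castSucc_lt_succ.ne)

lemma exists_wordProd_eq_length_eq_inversionCount (x : Perm (Fin N)) :
    ∃ w, wordProd w = x ∧ w.length = inversionCount x := by
  induction h : inversionCount x generalizing x with
  | zero =>
    refine ⟨[], ?_, rfl⟩
    by_contra hx
    obtain ⟨i, hi⟩ := exists_descent (Ne.symm hx)
    rw [inversionCount_mul_adjT_of_gt hi] at h
    omega
  | succ n ih =>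
    have hx : x ≠ 1 := by rintro rfl; rw [inversionCount_one] at h; omega
    obtain ⟨i, hi⟩ := exists_descent hx
    have hxi : inversionCount (x * adjT N i) = n := by
      rw [inversionCount_mul_adjT_of_gt hi] at h; omega
    obtain ⟨w, hw, hlen⟩ := ih (x * adjT N i) hxi
    refine ⟨w ++ [i], ?_, by simp [hlen]⟩
    rw [wordProd_append, hw, wordProd_singleton, mul_adjT_mul_adjT]

lemma inversionCount_wordProd_le (w : List (Letter N)) :
    inversionCount (wordProd w) ≤ w.length := by
  induction w using List.reverseRecOn with
  | nil => simp [inversionCount_one]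
  | append_singleton u i ih =>
    rw [wordProd_append, wordProd_singleton, List.length_append, List.length_singleton]
    rcases ((wordProd u).injective.ne (lo_ne_hi i)).lt_or_gt with h | h
    · rw [inversionCount_mul_adjT_of_lt h]; omega
    · have := inversionCount_mul_adjT_of_gt h; omega

lemma isReduced_iff {w : List (Letter N)} :
    IsReduced w ↔ w.length = inversionCount (wordProd w) := by
  refine ⟨fun hw => ?_, fun hw v hv => hw ▸ hv ▸ inversionCount_wordProd_le v⟩
  obtain ⟨v, hv, hlen⟩ := exists_wordProd_eq_length_eq_inversionCount (wordProd w)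
  exact le_antisymm (hlen ▸ hw v hv) (inversionCount_wordProd_le w)

lemma IsReduced.of_append {u v : List (Letter N)} (h : IsReduced (u ++ v)) : IsReduced u := by
  intro t ht
  have := h (t ++ v) (by rw [wordProd_append, wordProd_append, ht])
  simp only [List.length_append] at this
  omega

lemma isReduced_append_singleton_iff {u : List (Letter N)} (hu : IsReduced u) (i : Letter N) :
    IsReduced (u ++ [i]) ↔ wordProd u i.lo < wordProd u i.hi := by
  rw [isReduced_iff] at hu
  rw [isReduced_iff, wordProd_append, wordProd_singleton, List.length_append,
    List.length_singleton]
  rcases ((wordProd u).injective.ne (lo_ne_hi i)).lt_or_gt with h | h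
  · simp only [h, inversionCount_mul_adjT_of_lt h, hu]
  · have := inversionCount_mul_adjT_of_gt h
    simp only [h.not_gt, iff_false]
    omega

inductive BraidMove : List (Letter N) → List (Letter N) → Prop
  | comm (u v : List (Letter N)) {i k : Letter N} :
      Far i k → BraidMove (u ++ i :: k :: v) (u ++ k :: i :: v)
  | braid (u v : List (Letter N)) {i k : Letter N} :
      k.1 = i.1 + 1 → BraidMove (u ++ i :: k :: i :: v) (u ++ k :: i :: k :: v)

def BraidEquiv : List (Letter N) → List (Letter N) → Prop := Relation.EqvGen BraidMove

namespace BraidEquiv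

variable {u v w : List (Letter N)}

lemma refl (u : List (Letter N)) : BraidEquiv u u := Relation.EqvGen.refl u

lemma symm (h : BraidEquiv u v) : BraidEquiv v u := Relation.EqvGen.symm _ _ h

lemma trans (h : BraidEquiv u v) (h' : BraidEquiv v w) : BraidEquiv u w :=
  Relation.EqvGen.trans _ _ _ h h'

instance : Trans (BraidEquiv (N := N)) BraidEquiv BraidEquiv := ⟨trans⟩

lemma of_move (h : BraidMove u v) : BraidEquiv u v := Relation.EqvGen.rel _ _ h

lemma append_right (h : BraidEquiv u v) (t : List (Letter N)) :
    BraidEquiv (u ++ t) (v ++ t) := by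
  induction h with
  | rel _ _ h =>
    refine of_move ?_
    cases h with
    | comm u v h => simpa using BraidMove.comm u (v ++ t) h
    | braid u v h => simpa using BraidMove.braid u (v ++ t) h
  | refl => exact refl _
  | symm _ _ _ ih => exact ih.symm
  | trans _ _ _ _ _ ih ih' => exact ih.trans ih'

lemma eq_of_invariant {β : Type*} {f : List (Letter N) → β}
    (hf : ∀ u v, BraidMove u v → f u = f v) (h : BraidEquiv u v) : f u = f v :=
  congrArg (Quot.lift f hf) (Quot.eqvGen_sound h)

lemma length_eq (h : BraidEquiv u v) : u.length = v.length :=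
  h.eq_of_invariant fun _ _ hm => by cases hm <;> simp

lemma foldl_eq {X : Type*} {f : X → Letter N → X}
    (hcomm : ∀ x i k, Far i k → f (f x i) k = f (f x k) i)
    (hbraid : ∀ x i k, k.1 = i.1 + 1 → f (f (f x i) k) i = f (f (f x k) i) k)
    (h : BraidEquiv u v) (x : X) : u.foldl f x = v.foldl f x :=
  h.eq_of_invariant (f := fun w => w.foldl f x) fun _ _ hm => by
    cases hm with
    | comm _ _ h => simp [hcomm _ _ _ h]
    | braid _ _ h => simp [hbraid _ _ _ h]

lemma wordProd_eq (h : BraidEquiv u v) : wordProd u = wordProd v := by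
  have hprod : ∀ w : List (Letter N), wordProd w = w.foldl (fun x i => x * adjT N i) 1 :=
    fun w => by rw [wordProd, List.prod_eq_foldl, List.foldl_map]
  rw [hprod, hprod]
  refine h.foldl_eq (fun x i k hik => ?_) (fun x i k hk => ?_) 1
  · rw [mul_assoc, hik.adjT_commute, ← mul_assoc]
  · exact mul_adjT_braid hk x

lemma isReduced (h : BraidEquiv u v) (hu : IsReduced u) : IsReduced v := fun t ht =>
  h.length_eq ▸ hu t (ht.trans h.wordProd_eq.symm)

end BraidEquiv

def Letter.Adjacent (i k : Letter N) : Prop := k.1 = i.1 + 1 ∨ i.1 = k.1 + 1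

lemma Letter.far_or_adjacent {i k : Letter N} (h : i ≠ k) : Far i k ∨ Adjacent i k := by
  have : i.1 ≠ k.1 := fun h' => h (Subtype.ext h')
  unfold Far Adjacent; omega

lemma BraidEquiv.of_adjacent (v : List (Letter N)) {i k : Letter N} (h : Adjacent i k) :
    BraidEquiv (v ++ [k, i, k]) (v ++ [i, k, i]) := by
  rcases h with h | h
  · exact (of_move (BraidMove.braid v [] h)).symm
  · exact of_move (BraidMove.braid v [] h)

lemma Letter.Adjacent.descents {x : Perm (Fin N)} {i k : Letter N} (h : Adjacent i k)
    (hasc : x k.lo < x k.hi) (hdesc : x (adjT N k i.hi) < x (adjT N k i.lo)) :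
    x i.hi < x i.lo ∧ x (adjT N i k.hi) < x (adjT N i k.lo) := by
  rcases h with hk | hi
  · rw [adjT_succ_apply_hi hk, adjT_succ_apply_lo hk] at hdesc
    rw [adjT_apply_hi_succ hk, lo_eq_hi_of_succ hk, adjT_apply_hi]
    rw [lo_eq_hi_of_succ hk] at hasc
    exact ⟨hasc.trans hdesc, hdesc⟩
  · rw [lo_eq_hi_of_succ hi, adjT_apply_hi, adjT_apply_hi_succ hi] at hdesc
    rw [adjT_succ_apply_hi hi, adjT_succ_apply_lo hi]
    rw [← lo_eq_hi_of_succ hi] at hasc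
    exact ⟨hdesc.trans hasc, hdesc⟩

theorem exists_braidEquiv_append_singleton {u : List (Letter N)} (hu : IsReduced u)
    {i : Letter N} (hi : wordProd u i.hi < wordProd u i.lo) : ∃ v, BraidEquiv u (v ++ [i]) := by
  induction hn : u.length using Nat.strong_induction_on generalizing u i with
  | _ n ih =>
  obtain rfl | ⟨u, k, rfl⟩ := List.eq_nil_or_concat u
  · exact absurd hi (lo_lt_hi i).not_gt
  rw [List.concat_eq_append] at *
  obtain rfl | hki := eq_or_ne k i
  · exact ⟨u, BraidEquiv.refl _⟩
  have hlen : u.length < n := by simp [← hn]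
  have hasc : wordProd u k.lo < wordProd u k.hi :=
    (isReduced_append_singleton_iff hu.of_append k).1 hu
  rw [wordProd_append, wordProd_singleton, Perm.mul_apply, Perm.mul_apply] at hi
  rcases far_or_adjacent hki.symm with hfar | hadj
  · rw [hfar.adjT_apply_lo, hfar.adjT_apply_hi] at hi
    obtain ⟨v, hv⟩ := ih _ hlen hu.of_append hi rfl
    refine ⟨v ++ [k], (hv.append_right [k]).trans (BraidEquiv.of_move ?_)⟩
    simpa using BraidMove.comm v [] hfar
  · -- move `i` to the end of `u`, then `k` to the end of what precedes it; a braid move finishes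
    obtain ⟨hi', hk'⟩ := hadj.descents hasc hi
    obtain ⟨w, hw⟩ := ih _ hlen hu.of_append hi' rfl
    have hwi : IsReduced (w ++ [i]) := hw.isReduced hu.of_append
    have hlen' : w.length < u.length := by simp [hw.length_eq]
    rw [hw.wordProd_eq, wordProd_append, wordProd_singleton] at hk'
    simp only [Perm.mul_apply, adjT_apply_adjT] at hk'
    obtain ⟨w', hw'⟩ := ih _ (hlen'.trans hlen) hwi.of_append hk' rfl
    refine ⟨w' ++ [i, k], ?_⟩
    calc BraidEquiv (u ++ [k]) (w ++ [i] ++ [k]) := hw.append_right [k]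
      BraidEquiv _ (w' ++ [k] ++ [i] ++ [k]) := (hw'.append_right [i]).append_right [k]
      _ = w' ++ [k, i, k] := by simp
      BraidEquiv _ (w' ++ [i, k, i]) := BraidEquiv.of_adjacent w' hadj
      _ = w' ++ [i, k] ++ [i] := by simp

section Operators

instance : DiscreteMeasurableSpace (Perm (Fin N)) := ⟨fun _ => trivial⟩

variable (q : ℝ≥0)

noncomputable def piLinear (i : Letter N) :
    Measure (Perm (Fin N)) →ₗ[ℝ≥0∞] Measure (Perm (Fin N)) where
  toFun := piP N q i
  map_add' μ ν := by
    simp only [piP, Measure.map_add _ _ .of_discrete, smul_add]; abel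
  map_smul' c μ := by
    simp only [piP, Measure.map_smul, smul_add, RingHom.id_apply, smul_comm _ c]

lemma piLinear_apply (i : Letter N) (μ : Measure (Perm (Fin N))) :
    piLinear q i μ = piP N q i μ :=
  rfl

lemma piP_add (i : Letter N) (μ ν : Measure (Perm (Fin N))) :
    piP N q i (μ + ν) = piP N q i μ + piP N q i ν :=
  map_add (piLinear q i) μ ν

lemma piP_smul (i : Letter N) (c : ℝ≥0) (μ : Measure (Perm (Fin N))) :
    piP N q i (c • μ) = c • piP N q i μ :=
  (piLinear q i).map_smul_of_tower c μ

lemma piP_sum (i : Letter N) {ι : Type*} (s : Finset ι) (μ : ι → Measure (Perm (Fin N))) :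
    piP N q i (∑ j ∈ s, μ j) = ∑ j ∈ s, piP N q i (μ j) :=
  map_sum (piLinear q i) μ s

variable {q}

lemma piP_dirac (hq : q ≤ 1) (i : Letter N) (a : Perm (Fin N)) :
    piP N q i (Measure.dirac a) = if a i.lo < a i.hi then Measure.dirac (a * adjT N i)
      else q • Measure.dirac (a * adjT N i) + (1 - q) • Measure.dirac a := by
  have hσ : sigmaP N i a = if a i.lo < a i.hi then a * adjT N i else a := rfl
  rw [piP, Measure.map_dirac' .of_discrete, Measure.map_dirac' .of_discrete, hσ, tauP]
  split_ifs
  · rw [← add_smul, add_tsub_cancel_of_le hq, one_smul]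
  · rfl

lemma piP_piP_self (hq : q ≤ 1) (i : Letter N) (μ : Measure (Perm (Fin N))) :
    piP N q i (piP N q i μ) = q • μ + (1 - q) • piP N q i μ := by
  have : (piLinear q i).comp (piLinear q i) = q • LinearMap.id + (1 - q) • piLinear q i := by
    refine Measure.linearMap_ext_dirac fun a => ?_
    simp only [LinearMap.comp_apply, LinearMap.add_apply, LinearMap.smul_apply,
      LinearMap.id_apply, piLinear_apply]
    rcases (a.injective.ne (lo_ne_hi i)).lt_or_gt with h | h <;>
    simp [piP_dirac hq, h, h.not_gt, Perm.mul_apply, adjT_apply_lo, adjT_apply_hi,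
      mul_adjT_mul_adjT, piP_add, piP_smul]
  exact LinearMap.congr_fun this μ

lemma piP_comm (hq : q ≤ 1) {i k : Letter N} (h : Far i k) (μ : Measure (Perm (Fin N))) :
    piP N q i (piP N q k μ) = piP N q k (piP N q i μ) := by
  have : (piLinear q i).comp (piLinear q k) = (piLinear q k).comp (piLinear q i) := by
    refine Measure.linearMap_ext_dirac fun a => ?_
    simp only [LinearMap.comp_apply, piLinear_apply]
    rcases (a.injective.ne (lo_ne_hi i)).lt_or_gt with hi | hi <;>
    rcases (a.injective.ne (lo_ne_hi k)).lt_or_gt with hk | hk <;>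
    (simp only [piP_dirac hq, hi, hk, hi.not_gt, hk.not_gt, ↓reduceIte, Perm.mul_apply,
      h.adjT_apply_lo, h.adjT_apply_hi, h.symm.adjT_apply_lo, h.symm.adjT_apply_hi, mul_assoc,
      h.adjT_commute, piP_add, piP_smul, smul_add] <;> module)
  exact LinearMap.congr_fun this μ

lemma piP_braid (hq : q ≤ 1) {i k : Letter N} (hk : k.1 = i.1 + 1)
    (μ : Measure (Perm (Fin N))) :
    piP N q i (piP N q k (piP N q i μ)) = piP N q k (piP N q i (piP N q k μ)) := by
  have : (piLinear q i).comp ((piLinear q k).comp (piLinear q i))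
      = (piLinear q k).comp ((piLinear q i).comp (piLinear q k)) := by
    refine Measure.linearMap_ext_dirac fun a => ?_
    simp only [LinearMap.comp_apply, piLinear_apply]
    -- six of the eight sign patterns are orderings of `a i.lo`, `a i.hi`, `a k.hi`
    rcases (a.injective.ne (lo_ne_hi i)).lt_or_gt with h₁ | h₁ <;>
    rcases (a.injective.ne (hi_ne_hi_succ hk)).lt_or_gt with h₂ | h₂ <;>
    rcases (a.injective.ne (lo_ne_hi_succ hk)).lt_or_gt with h₃ | h₃ <;>
    first
    | (exfalso; order)
    | (simp only [piP_dirac hq, h₁, h₂, h₃, h₁.not_gt, h₂.not_gt, h₃.not_gt,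
        ↓reduceIte, lo_eq_hi_of_succ hk, Perm.mul_apply, adjT_apply_lo, adjT_apply_hi,
        adjT_succ_apply_lo hk, adjT_succ_apply_hi hk, adjT_succ_apply_hi_succ hk,
        adjT_apply_hi_succ hk,
        mul_adjT_braid hk, mul_adjT_mul_adjT, piP_add, piP_smul, smul_add] <;> module)
  exact LinearMap.congr_fun this μ

end Operators

noncomputable def piWord (q : ℝ≥0) (w : List (Letter N)) (ν : Measure (Perm (Fin N))) :
    Measure (Perm (Fin N)) :=
  w.foldl (fun ρ i => piP N q i ρ) ν

variable {q : ℝ≥0}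

lemma piWord_append_singleton (u : List (Letter N)) (i : Letter N) (ν : Measure (Perm (Fin N))) :
    piWord q (u ++ [i]) ν = piP N q i (piWord q u ν) := by
  simp [piWord]

lemma BraidEquiv.piWord_eq (hq : q ≤ 1) {u v : List (Letter N)} (h : BraidEquiv u v) :
    piWord q u = piWord q v :=
  funext <| h.foldl_eq (fun ρ _ _ hik => (piP_comm hq hik ρ).symm)
    (fun ρ _ _ hk => piP_braid hq hk ρ)

lemma exists_piWord_append_singleton_eq (hq : q ≤ 1) {u : List (Letter N)} (hu : IsReduced u)
    (i : Letter N) : ∃ v₁ v₂, IsReduced v₁ ∧ IsReduced v₂ ∧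
      ∀ ν, piWord q (u ++ [i]) ν = q • piWord q v₁ ν + (1 - q) • piWord q v₂ ν := by
  by_cases hr : IsReduced (u ++ [i])
  · exact ⟨u ++ [i], u ++ [i], hr, hr, fun ν => by
      rw [← add_smul, add_tsub_cancel_of_le hq, one_smul]⟩
  have hdesc : wordProd u i.hi < wordProd u i.lo :=
    (((wordProd u).injective.ne (lo_ne_hi i)).lt_or_gt.resolve_left
      (mt (isReduced_append_singleton_iff hu i).2 hr))
  obtain ⟨v, hv⟩ := exists_braidEquiv_append_singleton hu hdesc
  have hvi : IsReduced (v ++ [i]) := hv.isReduced hu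
  refine ⟨v, v ++ [i], hvi.of_append, hvi, fun ν => ?_⟩
  rw [(hv.append_right [i]).piWord_eq hq, piWord_append_singleton, piWord_append_singleton,
    piP_piP_self hq]

theorem exists_piWord_eq_sum_reduced (hq : q ≤ 1) (w : List (Letter N)) :
    ∃ (m : ℕ) (ws : Fin m → List (Letter N)) (lam : Fin m → ℝ≥0),
      (∀ j, IsReduced (ws j)) ∧ ∑ j, lam j = 1 ∧
      ∀ ν, piWord q w ν = ∑ j, lam j • piWord q (ws j) ν := by
  induction w using List.reverseRecOn with
  | nil =>
    exact ⟨1, ![[]], ![1], Fin.forall_fin_one.2 fun _ _ => Nat.zero_le _, by simp,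
      fun ν => by simp [piWord]⟩
  | append_singleton u i ih =>
    obtain ⟨m, ws, lam, hred, hsum, hu⟩ := ih
    choose v₁ v₂ hv₁ hv₂ hsplit using
      fun j => exists_piWord_append_singleton_eq hq (hred j) i
    refine ⟨m + m, Fin.append v₁ v₂,
      Fin.append (fun j => lam j * q) (fun j => lam j * (1 - q)),
      Fin.addCases (fun j => by rw [Fin.append_left]; exact hv₁ j)
        (fun j => by rw [Fin.append_right]; exact hv₂ j), ?_, fun ν => ?_⟩
    · rw [Fin.sum_univ_add]
      simp only [Fin.append_left, Fin.append_right, ← Finset.sum_mul, hsum, one_mul,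
        add_tsub_cancel_of_le hq]
    · rw [piWord_append_singleton, hu, piP_sum, Fin.sum_univ_add, ← Finset.sum_add_distrib]
      refine Finset.sum_congr rfl fun j _ => ?_
      simp only [piP_smul, ← piWord_append_singleton, hsplit, Fin.append_left, Fin.append_right,
        smul_add, mul_smul]

end AdjacentSorting

theorem piP_word_convex_combination_of_reduced_general (q : ℝ≥0) (hq : q ≤ 1) (N : ℕ)
    (w : List {i : ℕ // 1 ≤ i ∧ i < N}) :
    ∃ (m : ℕ) (ws : Fin m → List {i : ℕ // 1 ≤ i ∧ i < N}) (lam : Fin m → ℝ≥0),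
      (∀ j, ∀ v : List {i : ℕ // 1 ≤ i ∧ i < N},
        (v.map (adjT N)).prod = ((ws j).map (adjT N)).prod →
          (ws j).length ≤ v.length) ∧
      (∑ j, lam j) = 1 ∧
      ∀ ν : Measure (Equiv.Perm (Fin N)), IsProbabilityMeasure ν →
        w.foldl (fun ρ i => piP N q i ρ) ν =
          ∑ j, lam j • (ws j).foldl (fun ρ i => piP N q i ρ) ν := by
  obtain ⟨m, ws, lam, hred, hsum, hw⟩ :=
    AdjacentSorting.exists_piWord_eq_sum_reduced hq w
  exact ⟨m, ws, lam, hred, hsum, fun ν _ => hw ν⟩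

/-- Every word of operators `π_{i_n} ∘ ⋯ ∘ π_{i_1}` equals, as a map on
probability measures on `S_N`, a convex combination of operators corresponding
to reduced words (words `(j_1, …, j_ℓ)` such that every word of adjacent
transpositions with the same product has length at least `ℓ`). -/
theorem piP_word_convex_combination_of_reduced (q : ℝ≥0) (hq : q ≤ 1) (N : ℕ)
    (hN : 2 ≤ N) (w : List {i : ℕ // 1 ≤ i ∧ i < N}) :
    ∃ (m : ℕ) (ws : Fin m → List {i : ℕ // 1 ≤ i ∧ i < N}) (lam : Fin m → ℝ≥0),
      (∀ j, ∀ v : List {i : ℕ // 1 ≤ i ∧ i < N},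
        (v.map (adjT N)).prod = ((ws j).map (adjT N)).prod →
          (ws j).length ≤ v.length) ∧
      (∑ j, lam j) = 1 ∧
      ∀ ν : Measure (Equiv.Perm (Fin N)), IsProbabilityMeasure ν →
        w.foldl (fun ρ i => piP N q i ρ) ν =
          ∑ j, lam j • (ws j).foldl (fun ρ i => piP N q i ρ) ν :=
  piP_word_convex_combination_of_reduced_general q hq N w
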